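/- arXiv:1405.1383 — 7 statements merged into one kernel-verified Lean document; each statement's English description precedes it below -/
import Mathlib

section
/- Let Y : Fin n → ℝ with ∑ Y_i = 0, and let π be a uniformly random permutation. Then for distinct indices i, j: E[Y_{π(i)}² Y_{π(j)}²] = (n μ₂² - μ₄)/(n-1), where μ₂ = (1/n)∑ Y_i² and μ₄ = (1/n)∑ Y_i⁴. -/
open Finset Equiv

lemma perm_pair_sym {n : ℕ} (Y : Fin n → ℝ) {i j k l : Fin n} (hij : i ≠ j) (hkl : k ≠ l) :
    ∑ π : Equiv.Perm (Fin n), (Y (π i)) ^ 2 * (Y (π j)) ^ 2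
      = ∑ π : Equiv.Perm (Fin n), (Y (π k)) ^ 2 * (Y (π l)) ^ 2 := by
  set σ : Equiv.Perm (Fin n) := Equiv.swap (Equiv.swap i k j) l * Equiv.swap i k with hσ
  have hne : Equiv.swap i k j ≠ k := by
    intro h
    have := congrArg (Equiv.swap i k) h
    simp at this
    exact hij this.symm
  have hσi : σ i = k := by
    simp only [hσ, Equiv.Perm.mul_apply, Equiv.swap_apply_left]
    exact Equiv.swap_apply_of_ne_of_ne (Ne.symm hne) hkl
  have hσj : σ j = l := by
    simp only [hσ, Equiv.Perm.mul_apply, Equiv.swap_apply_left]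
  have h := Equiv.sum_comp (Equiv.mulRight σ)
    (fun π : Equiv.Perm (Fin n) => (Y (π i)) ^ 2 * (Y (π j)) ^ 2)
  simp only [Equiv.coe_mulRight, Equiv.Perm.mul_apply, hσi, hσj] at h
  exact h.symm

theorem stmt_3 (n : ℕ) (hn : 2 ≤ n) (Y : Fin n → ℝ) (hY : ∑ i, Y i = 0)
    (i j : Fin n) (hij : i ≠ j) :
    (∑ π : Equiv.Perm (Fin n), (Y (π i)) ^ 2 * (Y (π j)) ^ 2) / (Nat.factorial n : ℝ)
      = ((n : ℝ) * ((1 / (n : ℝ)) * ∑ i, (Y i) ^ 2) ^ 2 - (1 / (n : ℝ)) * ∑ i, (Y i) ^ 4)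
          / ((n : ℝ) - 1) := by
  set A := ∑ k, (Y k) ^ 2 with hA
  set B := ∑ k, (Y k) ^ 4 with hB
  set S := ∑ π : Equiv.Perm (Fin n), (Y (π i)) ^ 2 * (Y (π j)) ^ 2 with hS
  have hn0 : (n : ℝ) ≠ 0 := by positivity
  have hn1 : (n : ℝ) - 1 ≠ 0 := by
    have : (2 : ℝ) ≤ (n : ℝ) := by exact_mod_cast hn
    linarith
  have hf : (Nat.factorial n : ℝ) ≠ 0 := by positivity
  have key : (n : ℝ) * ((n : ℝ) - 1) * S = (Nat.factorial n : ℝ) * (A ^ 2 - B) := by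
    have h1 : ∑ k : Fin n, ∑ l ∈ univ \ {k},
        (∑ π : Equiv.Perm (Fin n), (Y (π k)) ^ 2 * (Y (π l)) ^ 2)
        = (n : ℝ) * ((n : ℝ) - 1) * S := by
      have hconst : ∀ k : Fin n, ∀ l ∈ univ \ ({k} : Finset (Fin n)),
          (∑ π : Equiv.Perm (Fin n), (Y (π k)) ^ 2 * (Y (π l)) ^ 2) = S := by
        intro k l hl
        rw [mem_sdiff, mem_singleton] at hl
        exact (perm_pair_sym Y hij (Ne.symm hl.2)).symm
      calc ∑ k : Fin n, ∑ l ∈ univ \ {k},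
            (∑ π : Equiv.Perm (Fin n), (Y (π k)) ^ 2 * (Y (π l)) ^ 2)
          = ∑ k : Fin n, ∑ _l ∈ univ \ ({k} : Finset (Fin n)), S := by
            refine Finset.sum_congr rfl fun k _ => Finset.sum_congr rfl fun l hl => hconst k l hl
        _ = ∑ k : Fin n, ((n - 1 : ℕ) : ℝ) * S := by
            refine Finset.sum_congr rfl fun k _ => ?_
            rw [Finset.sum_const, Finset.card_sdiff_of_subset (by simp), Finset.card_univ,
              Finset.card_singleton, Fintype.card_fin, nsmul_eq_mul]
        _ = (n : ℝ) * ((n : ℝ) - 1) * S := by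
            rw [Finset.sum_const, Finset.card_univ, Fintype.card_fin, nsmul_eq_mul,
              Nat.cast_sub (by omega)]
            push_cast
            ring
    have h2 : ∑ k : Fin n, ∑ l ∈ univ \ {k},
        (∑ π : Equiv.Perm (Fin n), (Y (π k)) ^ 2 * (Y (π l)) ^ 2)
        = (Nat.factorial n : ℝ) * (A ^ 2 - B) := by
      have hswap : ∑ k : Fin n, ∑ l ∈ univ \ {k},
          (∑ π : Equiv.Perm (Fin n), (Y (π k)) ^ 2 * (Y (π l)) ^ 2)
          = ∑ π : Equiv.Perm (Fin n), ∑ k : Fin n, ∑ l ∈ univ \ {k},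
              (Y (π k)) ^ 2 * (Y (π l)) ^ 2 := by
        rw [Finset.sum_comm]
        exact Finset.sum_congr rfl fun π _ => Finset.sum_comm
      rw [hswap]
      have hper : ∀ π : Equiv.Perm (Fin n),
          (∑ k : Fin n, ∑ l ∈ univ \ {k}, (Y (π k)) ^ 2 * (Y (π l)) ^ 2) = A ^ 2 - B := by
        intro π
        have hA' : ∑ k : Fin n, (Y (π k)) ^ 2 = A := Equiv.sum_comp π (fun x => (Y x) ^ 2)
        have hB' : ∑ k : Fin n, (Y (π k)) ^ 4 = B := Equiv.sum_comp π (fun x => (Y x) ^ 4)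
        calc ∑ k : Fin n, ∑ l ∈ univ \ {k}, (Y (π k)) ^ 2 * (Y (π l)) ^ 2
            = ∑ k : Fin n, ((Y (π k)) ^ 2 * A - (Y (π k)) ^ 4) := by
              refine Finset.sum_congr rfl fun k _ => ?_
              rw [Finset.sum_sdiff_eq_sub (by simp), ← Finset.mul_sum, hA',
                Finset.sum_singleton]
              ring
          _ = A ^ 2 - B := by
              rw [Finset.sum_sub_distrib, ← Finset.sum_mul, hA', hB']
              ring
      rw [Finset.sum_congr rfl fun π _ => hper π, Finset.sum_const, Finset.card_univ,
        Fintype.card_perm, Fintype.card_fin, nsmul_eq_mul]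
    rw [← h1, h2]
  have hS' : S = (Nat.factorial n : ℝ) * (A ^ 2 - B) / ((n : ℝ) * ((n : ℝ) - 1)) := by
    field_simp
    linarith [key]
  rw [hS']
  field_simp
end

section
/- Let Y : Fin n → ℝ with ∑ Y_i = 0, and let π be a uniformly random permutation. Then for pairwise distinct indices i, j, k: E[Y_{π(i)}² Y_{π(j)} Y_{π(k)}] = (-n μ₂² + 2μ₄)/((n-1)(n-2)), where μ₂ = (1/n)∑ Y_i², μ₄ = (1/n)∑ Y_i⁴. -/
open Finset

private lemma exists_perm_three {n : ℕ} {i j k a b c : Fin n}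
    (hij : i ≠ j) (hik : i ≠ k) (hjk : j ≠ k)
    (hab : a ≠ b) (hac : a ≠ c) (hbc : b ≠ c) :
    ∃ σ : Equiv.Perm (Fin n), σ i = a ∧ σ j = b ∧ σ k = c := by
  set σ₁ := Equiv.swap i a with hσ₁
  have h1i : σ₁ i = a := Equiv.swap_apply_left i a
  have hja : σ₁ j ≠ a := fun h => hij (σ₁.injective (by rw [h1i, h]) ).symm
  have hka : σ₁ k ≠ a := fun h => hik (σ₁.injective (by rw [h1i, h])).symm
  have hkj : σ₁ k ≠ σ₁ j := fun h => hjk (σ₁.injective h).symm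
  set σ₂ := Equiv.swap (σ₁ j) b with hσ₂
  have h2j : σ₂ (σ₁ j) = b := Equiv.swap_apply_left _ _
  have h2a : σ₂ a = a := Equiv.swap_apply_of_ne_of_ne (Ne.symm hja) hab
  have hk2a : σ₂ (σ₁ k) ≠ a := fun h => hka (σ₂.injective (by rw [h2a, h]))
  have hk2b : σ₂ (σ₁ k) ≠ b := fun h => hkj (σ₂.injective (by rw [h2j, h]))
  set σ₃ := Equiv.swap (σ₂ (σ₁ k)) c with hσ₃
  refine ⟨(σ₁.trans σ₂).trans σ₃, ?_, ?_, ?_⟩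
  · simp only [Equiv.trans_apply, h1i, h2a]
    exact Equiv.swap_apply_of_ne_of_ne (Ne.symm hk2a) hac
  · simp only [Equiv.trans_apply, h2j]
    exact Equiv.swap_apply_of_ne_of_ne (Ne.symm hk2b) hbc
  · simp only [Equiv.trans_apply]
    exact Equiv.swap_apply_left _ _

private lemma innerSum4 {n : ℕ} (Z : Fin n → ℝ) (hZ : ∑ x, Z x = 0) :
    ∑ a, ∑ b ∈ univ.erase a, ∑ c ∈ (univ.erase a).erase b,
      Z a ^ 2 * Z b * Z c
    = 2 * ∑ x, Z x ^ 4 - (∑ x, Z x ^ 2) ^ 2 := by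
  have key : ∀ a : Fin n, ∑ b ∈ univ.erase a, ∑ c ∈ (univ.erase a).erase b,
      Z a ^ 2 * Z b * Z c = 2 * Z a ^ 4 - Z a ^ 2 * ∑ x, Z x ^ 2 := by
    intro a
    have step1 : ∀ b ∈ univ.erase a, ∑ c ∈ (univ.erase a).erase b,
        Z a ^ 2 * Z b * Z c = Z a ^ 2 * Z b * (-Z a - Z b) := by
      intro b hb
      rw [← Finset.mul_sum, Finset.sum_erase_eq_sub hb,
        Finset.sum_erase_eq_sub (mem_univ a), hZ]
      ring
    rw [Finset.sum_congr rfl step1]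
    have e1 : ∑ b ∈ univ.erase a, Z b = -Z a := by
      rw [Finset.sum_erase_eq_sub (mem_univ a), hZ]; ring
    have e2 : ∑ b ∈ univ.erase a, Z b ^ 2 = (∑ x, Z x ^ 2) - Z a ^ 2 :=
      Finset.sum_erase_eq_sub (mem_univ a)
    have : ∀ b : Fin n, Z a ^ 2 * Z b * (-Z a - Z b)
        = (-(Z a ^ 3)) * Z b + (-(Z a ^ 2)) * Z b ^ 2 := by intro b; ring
    rw [Finset.sum_congr rfl (fun b _ => this b), Finset.sum_add_distrib,
      ← Finset.mul_sum, ← Finset.mul_sum, e1, e2]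
    ring
  rw [Finset.sum_congr rfl (fun a _ => key a), Finset.sum_sub_distrib,
    ← Finset.mul_sum, ← Finset.sum_mul]
  ring

theorem stmt_4 (n : ℕ) (hn : 3 ≤ n) (Y : Fin n → ℝ) (hY : ∑ i, Y i = 0)
    (i j k : Fin n) (hij : i ≠ j) (hik : i ≠ k) (hjk : j ≠ k) :
    (∑ π : Equiv.Perm (Fin n), (Y (π i)) ^ 2 * Y (π j) * Y (π k)) / (Nat.factorial n : ℝ)
      = (-(n : ℝ) * ((1 / (n : ℝ)) * ∑ i, (Y i) ^ 2) ^ 2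
          + 2 * ((1 / (n : ℝ)) * ∑ i, (Y i) ^ 4))
        / (((n : ℝ) - 1) * ((n : ℝ) - 2)) := by
  set L : ℝ := ∑ π : Equiv.Perm (Fin n), (Y (π i)) ^ 2 * Y (π j) * Y (π k) with hL
  set S2 : ℝ := ∑ x, Y x ^ 2 with hS2
  set S4 : ℝ := ∑ x, Y x ^ 4 with hS4
  -- constancy of the permutation sum over distinct triples
  have const : ∀ a b c : Fin n, a ≠ b → a ≠ c → b ≠ c →
      (∑ π : Equiv.Perm (Fin n), (Y (π a)) ^ 2 * Y (π b) * Y (π c)) = L := by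
    intro a b c hab hac hbc
    obtain ⟨σ, h1, h2, h3⟩ := exists_perm_three hab hac hbc hij hik hjk
    rw [hL]
    rw [← Equiv.sum_comp (Equiv.mulRight σ)
      (fun π : Equiv.Perm (Fin n) => (Y (π a)) ^ 2 * Y (π b) * Y (π c))]
    apply Finset.sum_congr rfl
    intro π _
    simp [Equiv.Perm.mul_apply, h1, h2, h3]
  -- the big double-counting identity
  have count : ((n : ℝ) * ((n : ℝ) - 1) * ((n : ℝ) - 2)) * L
      = (Nat.factorial n : ℝ) * (2 * S4 - S2 ^ 2) := by
    have lhs_eq : ∑ a : Fin n, ∑ b ∈ univ.erase a, ∑ c ∈ (univ.erase a).erase b,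
        (∑ π : Equiv.Perm (Fin n), (Y (π a)) ^ 2 * Y (π b) * Y (π c))
        = ((n : ℝ) * ((n : ℝ) - 1) * ((n : ℝ) - 2)) * L := by
      have : ∀ a : Fin n, ∀ b ∈ univ.erase a, ∀ c ∈ (univ.erase a).erase b,
          (∑ π : Equiv.Perm (Fin n), (Y (π a)) ^ 2 * Y (π b) * Y (π c)) = L := by
        intro a b hb c hc
        have hba : b ≠ a := (Finset.mem_erase.mp hb).1
        have hcb : c ≠ b := (Finset.mem_erase.mp hc).1
        have hca : c ≠ a := (Finset.mem_erase.mp (Finset.mem_of_mem_erase hc)).1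
        exact const a b c (Ne.symm hba) (Ne.symm hca) (Ne.symm hcb)
      calc ∑ a : Fin n, ∑ b ∈ univ.erase a, ∑ c ∈ (univ.erase a).erase b,
            (∑ π : Equiv.Perm (Fin n), (Y (π a)) ^ 2 * Y (π b) * Y (π c))
          = ∑ a : Fin n, ∑ b ∈ univ.erase a, ∑ _c ∈ (univ.erase a).erase b, L := by
            refine Finset.sum_congr rfl fun a _ => Finset.sum_congr rfl fun b hb =>
              Finset.sum_congr rfl fun c hc => this a b hb c hc
        _ = ((n : ℝ) * ((n : ℝ) - 1) * ((n : ℝ) - 2)) * L := by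
            have h1 : (1 : ℕ) ≤ n := by omega
            have h2 : (2 : ℕ) ≤ n := by omega
            simp only [Finset.sum_const, nsmul_eq_mul]
            rw [Finset.sum_congr rfl (fun a (ha : a ∈ univ) => by
              rw [Finset.sum_congr rfl (fun b hb => by
                rw [Finset.card_erase_of_mem hb, Finset.card_erase_of_mem (mem_univ a),
                  Finset.card_univ, Fintype.card_fin])])]
            simp only [Finset.sum_const, nsmul_eq_mul, Finset.card_erase_of_mem (mem_univ _),
              Finset.card_univ, Fintype.card_fin, Finset.card_fin]
            have c1 : ((n - 1 : ℕ) : ℝ) = (n : ℝ) - 1 := by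
              push_cast [Nat.cast_sub h1]; ring
            have c2 : ((n - 1 - 1 : ℕ) : ℝ) = (n : ℝ) - 2 := by
              rw [show n - 1 - 1 = n - 2 by omega]; push_cast [Nat.cast_sub h2]; ring
            rw [c1, c2]; ring
    have rhs_eq : ∑ a : Fin n, ∑ b ∈ univ.erase a, ∑ c ∈ (univ.erase a).erase b,
        (∑ π : Equiv.Perm (Fin n), (Y (π a)) ^ 2 * Y (π b) * Y (π c))
        = (Nat.factorial n : ℝ) * (2 * S4 - S2 ^ 2) := by
      have perm_pow : ∀ (π : Equiv.Perm (Fin n)) (m : ℕ),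
          ∑ x, Y (π x) ^ m = ∑ x, Y x ^ m := fun π m =>
        Equiv.sum_comp π (fun x => Y x ^ m)
      rw [Finset.sum_congr rfl fun a _ => Finset.sum_congr rfl fun b _ =>
        Finset.sum_comm, Finset.sum_congr rfl fun a _ => Finset.sum_comm,
        Finset.sum_comm]
      have hterm : ∀ π : Equiv.Perm (Fin n),
          ∑ a : Fin n, ∑ b ∈ univ.erase a, ∑ c ∈ (univ.erase a).erase b,
            (Y (π a)) ^ 2 * Y (π b) * Y (π c) = 2 * S4 - S2 ^ 2 := by
        intro π
        have h0 : ∑ x, Y (π x) = 0 := by rw [Equiv.sum_comp π Y]; exact hY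
        have := innerSum4 (fun x => Y (π x)) h0
        simpa [perm_pow π 2, perm_pow π 4, hS2, hS4] using this
      rw [Finset.sum_congr rfl fun π _ => hterm π]
      rw [Finset.sum_const, Finset.card_univ, Fintype.card_perm, Fintype.card_fin,
        nsmul_eq_mul]
    rw [← lhs_eq, rhs_eq]
  -- finish by algebra
  have hfac : (Nat.factorial n : ℝ) ≠ 0 := Nat.cast_ne_zero.mpr (Nat.factorial_ne_zero n)
  have hn0 : (n : ℝ) ≠ 0 := by positivity
  have hn1 : (n : ℝ) - 1 ≠ 0 := by
    have : (3 : ℝ) ≤ (n : ℝ) := by exact_mod_cast hn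
    linarith
  have hn2 : (n : ℝ) - 2 ≠ 0 := by
    have : (3 : ℝ) ≤ (n : ℝ) := by exact_mod_cast hn
    linarith
  have hn0' : (0:ℝ) < n := by
    have : (3 : ℝ) ≤ (n : ℝ) := by exact_mod_cast hn
    linarith
  have hK : (n : ℝ) * ((n : ℝ) - 1) * ((n : ℝ) - 2) ≠ 0 := by
    exact mul_ne_zero (mul_ne_zero hn0 hn1) hn2
  have hL' : L = (Nat.factorial n : ℝ) * (2 * S4 - S2 ^ 2)
      / ((n : ℝ) * ((n : ℝ) - 1) * ((n : ℝ) - 2)) := by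
    rw [eq_div_iff hK]; linarith [count]
  rw [hL']
  field_simp
  ring
end

section
/- Let Y : Fin n → ℝ with ∑ Y_i = 0, and let π be a uniformly random permutation. Then for pairwise distinct indices i, j, k, ℓ: E[Y_{π(i)} Y_{π(j)} Y_{π(k)} Y_{π(ℓ)}] = (3n μ₂² - 6μ₄)/((n-1)(n-2)(n-3)), where μ₂ = (1/n)∑ Y_i², μ₄ = (1/n)∑ Y_i⁴. -/
open Finset Equiv

private lemma exists_perm4 {n : ℕ} {i j k l a b c d : Fin n}
    (hij : i ≠ j) (hik : i ≠ k) (hil : i ≠ l) (hjk : j ≠ k) (hjl : j ≠ l) (hkl : k ≠ l)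
    (hab : a ≠ b) (hac : a ≠ c) (had : a ≠ d) (hbc : b ≠ c) (hbd : b ≠ d) (hcd : c ≠ d) :
    ∃ σ : Equiv.Perm (Fin n), σ i = a ∧ σ j = b ∧ σ k = c ∧ σ l = d := by
  classical
  set σ1 : Equiv.Perm (Fin n) := Equiv.swap i a with hσ1
  have h1i : σ1 i = a := Equiv.swap_apply_left i a
  set σ2 : Equiv.Perm (Fin n) := σ1.trans (Equiv.swap (σ1 j) b) with hσ2
  have h2i : σ2 i = a := by
    show Equiv.swap (σ1 j) b (σ1 i) = a
    rw [h1i]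
    exact Equiv.swap_apply_of_ne_of_ne
      (fun h => hij (σ1.injective (by rw [h1i, ← h]))) hab
  have h2j : σ2 j = b := Equiv.swap_apply_left (σ1 j) b
  set σ3 : Equiv.Perm (Fin n) := σ2.trans (Equiv.swap (σ2 k) c) with hσ3
  have h3i : σ3 i = a := by
    show Equiv.swap (σ2 k) c (σ2 i) = a
    rw [h2i]
    exact Equiv.swap_apply_of_ne_of_ne
      (fun h => hik (σ2.injective (by rw [h2i, ← h]))) hac
  have h3j : σ3 j = b := by
    show Equiv.swap (σ2 k) c (σ2 j) = b
    rw [h2j]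
    exact Equiv.swap_apply_of_ne_of_ne
      (fun h => hjk (σ2.injective (by rw [h2j, ← h]))) hbc
  have h3k : σ3 k = c := Equiv.swap_apply_left (σ2 k) c
  set σ4 : Equiv.Perm (Fin n) := σ3.trans (Equiv.swap (σ3 l) d) with hσ4
  have h4i : σ4 i = a := by
    show Equiv.swap (σ3 l) d (σ3 i) = a
    rw [h3i]
    exact Equiv.swap_apply_of_ne_of_ne
      (fun h => hil (σ3.injective (by rw [h3i, ← h]))) had
  have h4j : σ4 j = b := by
    show Equiv.swap (σ3 l) d (σ3 j) = b
    rw [h3j]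
    exact Equiv.swap_apply_of_ne_of_ne
      (fun h => hjl (σ3.injective (by rw [h3j, ← h]))) hbd
  have h4k : σ4 k = c := by
    show Equiv.swap (σ3 l) d (σ3 k) = c
    rw [h3k]
    exact Equiv.swap_apply_of_ne_of_ne
      (fun h => hkl (σ3.injective (by rw [h3k, ← h]))) hcd
  have h4l : σ4 l = d := Equiv.swap_apply_left (σ3 l) d
  exact ⟨σ4, h4i, h4j, h4k, h4l⟩

/-- Sum over distinct quadruples: power-sum expansion. -/
private lemma nested_eq {n : ℕ} (Z : Fin n → ℝ) :
    (∑ a, ∑ b ∈ univ.erase a, ∑ c ∈ (univ.erase a).erase b,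
        ∑ d ∈ ((univ.erase a).erase b).erase c, Z a * Z b * Z c * Z d)
      = (∑ x, Z x) ^ 4 - 6 * (∑ x, Z x) ^ 2 * (∑ x, Z x ^ 2)
        + 8 * (∑ x, Z x) * (∑ x, Z x ^ 3) + 3 * (∑ x, Z x ^ 2) ^ 2
        - 6 * ∑ x, Z x ^ 4 := by
  classical
  set s1 : ℝ := ∑ x, Z x with hs1
  set s2 : ℝ := ∑ x, Z x ^ 2 with hs2
  set s3 : ℝ := ∑ x, Z x ^ 3 with hs3
  set s4 : ℝ := ∑ x, Z x ^ 4 with hs4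
  have e1 : ∀ (f : Fin n → ℝ) (S : ℝ), (∑ x, f x) = S → ∀ a : Fin n,
      ∑ x ∈ univ.erase a, f x = S - f a := by
    intro f S hS a
    rw [Finset.sum_erase_eq_sub (Finset.mem_univ a), hS]
  have e2 : ∀ (f : Fin n → ℝ) (S : ℝ), (∑ x, f x) = S → ∀ a : Fin n, ∀ b ∈ univ.erase a,
      ∑ x ∈ (univ.erase a).erase b, f x = S - f a - f b := by
    intro f S hS a b hb
    rw [Finset.sum_erase_eq_sub hb, e1 f S hS a]
  have e3 : ∀ (f : Fin n → ℝ) (S : ℝ), (∑ x, f x) = S → ∀ a : Fin n, ∀ b ∈ univ.erase a,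
      ∀ c ∈ (univ.erase a).erase b,
      ∑ x ∈ ((univ.erase a).erase b).erase c, f x = S - f a - f b - f c := by
    intro f S hS a b hb c hc
    rw [Finset.sum_erase_eq_sub hc, e2 f S hS a b hb]
  calc
    (∑ a, ∑ b ∈ univ.erase a, ∑ c ∈ (univ.erase a).erase b,
        ∑ d ∈ ((univ.erase a).erase b).erase c, Z a * Z b * Z c * Z d)
      = ∑ a, ∑ b ∈ univ.erase a, ∑ c ∈ (univ.erase a).erase b,
          Z a * Z b * Z c * (s1 - Z a - Z b - Z c) := by
        refine Finset.sum_congr rfl fun a _ => Finset.sum_congr rfl fun b hb =>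
          Finset.sum_congr rfl fun c hc => ?_
        rw [← Finset.mul_sum, e3 Z s1 rfl a b hb c hc]
    _ = ∑ a, ∑ b ∈ univ.erase a,
          Z a * Z b * ((s1 - Z a - Z b) ^ 2 - (s2 - Z a ^ 2 - Z b ^ 2)) := by
        refine Finset.sum_congr rfl fun a _ => Finset.sum_congr rfl fun b hb => ?_
        have h1 := e2 Z s1 rfl a b hb
        have h2 := e2 (fun x => Z x ^ 2) s2 rfl a b hb
        calc
          (∑ c ∈ (univ.erase a).erase b, Z a * Z b * Z c * (s1 - Z a - Z b - Z c))
            = ∑ c ∈ (univ.erase a).erase b,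
                ((Z a * Z b * (s1 - Z a - Z b)) * Z c - (Z a * Z b) * Z c ^ 2) :=
              Finset.sum_congr rfl fun c _ => by ring
          _ = (Z a * Z b * (s1 - Z a - Z b)) * (∑ c ∈ (univ.erase a).erase b, Z c)
                - (Z a * Z b) * ∑ c ∈ (univ.erase a).erase b, Z c ^ 2 := by
              rw [Finset.sum_sub_distrib, Finset.mul_sum, Finset.mul_sum]
          _ = Z a * Z b * ((s1 - Z a - Z b) ^ 2 - (s2 - Z a ^ 2 - Z b ^ 2)) := by
              rw [h1, h2]; ring
    _ = ∑ a, (Z a * (((s1 - Z a) ^ 2 - s2 + Z a ^ 2)) * (s1 - Z a)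
            - (2 * Z a * (s1 - Z a)) * (s2 - Z a ^ 2)
            + (2 * Z a) * (s3 - Z a ^ 3)) := by
        refine Finset.sum_congr rfl fun a _ => ?_
        have h1 := e1 Z s1 rfl a
        have h2 := e1 (fun x => Z x ^ 2) s2 rfl a
        have h3 := e1 (fun x => Z x ^ 3) s3 rfl a
        calc
          (∑ b ∈ univ.erase a, Z a * Z b * ((s1 - Z a - Z b) ^ 2 - (s2 - Z a ^ 2 - Z b ^ 2)))
            = ∑ b ∈ univ.erase a,
                ((Z a * (((s1 - Z a) ^ 2 - s2 + Z a ^ 2))) * Z b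
                  - (2 * Z a * (s1 - Z a)) * Z b ^ 2 + (2 * Z a) * Z b ^ 3) :=
              Finset.sum_congr rfl fun b _ => by ring
          _ = (Z a * (((s1 - Z a) ^ 2 - s2 + Z a ^ 2))) * (∑ b ∈ univ.erase a, Z b)
                - (2 * Z a * (s1 - Z a)) * (∑ b ∈ univ.erase a, Z b ^ 2)
                + (2 * Z a) * ∑ b ∈ univ.erase a, Z b ^ 3 := by
              rw [Finset.sum_add_distrib, Finset.sum_sub_distrib, Finset.mul_sum,
                Finset.mul_sum, Finset.mul_sum]
          _ = Z a * (((s1 - Z a) ^ 2 - s2 + Z a ^ 2)) * (s1 - Z a)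
                - (2 * Z a * (s1 - Z a)) * (s2 - Z a ^ 2)
                + (2 * Z a) * (s3 - Z a ^ 3) := by rw [h1, h2, h3]
    _ = ∑ a, ((s1 ^ 3 - 3 * s1 * s2 + 2 * s3) * Z a + (3 * s2 - 3 * s1 ^ 2) * Z a ^ 2
            + (6 * s1) * Z a ^ 3 + (-6 : ℝ) * Z a ^ 4) :=
        Finset.sum_congr rfl fun a _ => by ring
    _ = (s1 ^ 3 - 3 * s1 * s2 + 2 * s3) * s1 + (3 * s2 - 3 * s1 ^ 2) * s2
          + (6 * s1) * s3 + (-6 : ℝ) * s4 := by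
        rw [Finset.sum_add_distrib, Finset.sum_add_distrib, Finset.sum_add_distrib,
          ← Finset.mul_sum, ← Finset.mul_sum, ← Finset.mul_sum, ← Finset.mul_sum]
    _ = s1 ^ 4 - 6 * s1 ^ 2 * s2 + 8 * s1 * s3 + 3 * s2 ^ 2 - 6 * s4 := by ring

theorem stmt_5 (n : ℕ) (hn : 4 ≤ n) (Y : Fin n → ℝ) (hY : ∑ i, Y i = 0)
    (i j k l : Fin n) (hij : i ≠ j) (hik : i ≠ k) (hil : i ≠ l)
    (hjk : j ≠ k) (hjl : j ≠ l) (hkl : k ≠ l) :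
    (∑ π : Equiv.Perm (Fin n), Y (π i) * Y (π j) * Y (π k) * Y (π l))
        / (Nat.factorial n : ℝ)
      = (3 * (n : ℝ) * ((1 / (n : ℝ)) * ∑ i, (Y i) ^ 2) ^ 2
          - 6 * ((1 / (n : ℝ)) * ∑ i, (Y i) ^ 4))
        / (((n : ℝ) - 1) * ((n : ℝ) - 2) * ((n : ℝ) - 3)) := by
  classical
  set S : ℝ := ∑ π : Equiv.Perm (Fin n), Y (π i) * Y (π j) * Y (π k) * Y (π l) with hS
  set s2 : ℝ := ∑ x, Y x ^ 2 with hs2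
  set s4 : ℝ := ∑ x, Y x ^ 4 with hs4
  -- each distinct quadruple gives the same permutation sum
  have keyA : ∀ a b c d : Fin n, a ≠ b → a ≠ c → a ≠ d → b ≠ c → b ≠ d → c ≠ d →
      (∑ π : Equiv.Perm (Fin n), Y (π a) * Y (π b) * Y (π c) * Y (π d)) = S := by
    intro a b c d hab hac had hbc hbd hcd
    obtain ⟨σ, hσi, hσj, hσk, hσl⟩ :=
      exists_perm4 hij hik hil hjk hjl hkl hab hac had hbc hbd hcd
    rw [hS]
    exact Fintype.sum_equiv (Equiv.mulRight σ)
      (fun π => Y (π a) * Y (π b) * Y (π c) * Y (π d))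
      (fun π => Y (π i) * Y (π j) * Y (π k) * Y (π l)) fun π => by
        simp [Equiv.Perm.mul_apply, hσi, hσj, hσk, hσl]
  -- the big double sum T
  have hT1 : (∑ a, ∑ b ∈ univ.erase a, ∑ c ∈ (univ.erase a).erase b,
        ∑ d ∈ ((univ.erase a).erase b).erase c,
        (∑ π : Equiv.Perm (Fin n), Y (π a) * Y (π b) * Y (π c) * Y (π d)))
      = ((n : ℝ) * ((n : ℝ) - 1) * ((n : ℝ) - 2) * ((n : ℝ) - 3)) * S := by
    have : (∑ a, ∑ b ∈ univ.erase a, ∑ c ∈ (univ.erase a).erase b,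
          ∑ d ∈ ((univ.erase a).erase b).erase c,
          (∑ π : Equiv.Perm (Fin n), Y (π a) * Y (π b) * Y (π c) * Y (π d)))
        = ∑ a : Fin n, ∑ b ∈ univ.erase a, ∑ c ∈ (univ.erase a).erase b,
            ∑ _d ∈ ((univ.erase a).erase b).erase c, S := by
      refine Finset.sum_congr rfl fun a _ => Finset.sum_congr rfl fun b hb =>
        Finset.sum_congr rfl fun c hc => Finset.sum_congr rfl fun d hd => ?_
      obtain ⟨hdc, hdb, hda, -⟩ : d ≠ c ∧ d ≠ b ∧ d ≠ a ∧ True := by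
        simp only [Finset.mem_erase, Finset.mem_univ] at hd; tauto
      obtain ⟨hcb, hca, -⟩ : c ≠ b ∧ c ≠ a ∧ True := by
        simp only [Finset.mem_erase, Finset.mem_univ] at hc; tauto
      have hba : b ≠ a := (Finset.mem_erase.mp hb).1
      exact keyA a b c d hba.symm hca.symm hda.symm hcb.symm hdb.symm hdc.symm
    rw [this]
    have hcard : ∀ a : Fin n, ∀ b ∈ univ.erase a, ∀ c ∈ (univ.erase a).erase b,
        (((univ.erase a).erase b).erase c).card = n - 3 := by
      intro a b hb c hc
      rw [Finset.card_erase_of_mem hc, Finset.card_erase_of_mem hb,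
        Finset.card_erase_of_mem (Finset.mem_univ a), Finset.card_univ, Fintype.card_fin]
      omega
    have hcard2 : ∀ a : Fin n, ∀ b ∈ univ.erase a,
        ((univ.erase a).erase b).card = n - 2 := by
      intro a b hb
      rw [Finset.card_erase_of_mem hb, Finset.card_erase_of_mem (Finset.mem_univ a),
        Finset.card_univ, Fintype.card_fin]
      omega
    have hcard1 : ∀ a : Fin n, (univ.erase a).card = n - 1 := by
      intro a
      rw [Finset.card_erase_of_mem (Finset.mem_univ a), Finset.card_univ, Fintype.card_fin]
    have step : (∑ a : Fin n, ∑ b ∈ univ.erase a, ∑ c ∈ (univ.erase a).erase b,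
          ∑ _d ∈ ((univ.erase a).erase b).erase c, S)
        = ∑ _a : Fin n, ((n - 1 : ℕ) : ℝ) * (((n - 2 : ℕ) : ℝ) * (((n - 3 : ℕ) : ℝ) * S)) := by
      refine Finset.sum_congr rfl fun a _ => ?_
      rw [show (∑ b ∈ univ.erase a, ∑ c ∈ (univ.erase a).erase b,
          ∑ _d ∈ ((univ.erase a).erase b).erase c, S)
          = ∑ _b ∈ univ.erase a, (((n - 2 : ℕ) : ℝ) * (((n - 3 : ℕ) : ℝ) * S)) from
        Finset.sum_congr rfl fun b hb => by
          rw [show (∑ c ∈ (univ.erase a).erase b,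
              ∑ _d ∈ ((univ.erase a).erase b).erase c, S)
              = ∑ _c ∈ (univ.erase a).erase b, (((n - 3 : ℕ) : ℝ) * S) from
            Finset.sum_congr rfl fun c hc => by
              rw [Finset.sum_const, hcard a b hb c hc, nsmul_eq_mul]]
          rw [Finset.sum_const, hcard2 a b hb, nsmul_eq_mul]]
      rw [Finset.sum_const, hcard1 a, nsmul_eq_mul]
    rw [step, Finset.sum_const, Finset.card_univ, Fintype.card_fin, nsmul_eq_mul]
    have h1 : ((n - 1 : ℕ) : ℝ) = (n : ℝ) - 1 := by
      rw [Nat.cast_sub (by omega)]; norm_num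
    have h2 : ((n - 2 : ℕ) : ℝ) = (n : ℝ) - 2 := by
      rw [Nat.cast_sub (by omega)]; norm_num
    have h3 : ((n - 3 : ℕ) : ℝ) = (n : ℝ) - 3 := by
      rw [Nat.cast_sub (by omega)]; norm_num
    rw [h1, h2, h3]; ring
  -- swap summation order and compute via nested_eq
  have hT2 : (∑ a, ∑ b ∈ univ.erase a, ∑ c ∈ (univ.erase a).erase b,
        ∑ d ∈ ((univ.erase a).erase b).erase c,
        (∑ π : Equiv.Perm (Fin n), Y (π a) * Y (π b) * Y (π c) * Y (π d)))
      = (Nat.factorial n : ℝ) * (3 * s2 ^ 2 - 6 * s4) := by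
    have swap1 : (∑ a, ∑ b ∈ univ.erase a, ∑ c ∈ (univ.erase a).erase b,
          ∑ d ∈ ((univ.erase a).erase b).erase c,
          (∑ π : Equiv.Perm (Fin n), Y (π a) * Y (π b) * Y (π c) * Y (π d)))
        = ∑ π : Equiv.Perm (Fin n), ∑ a, ∑ b ∈ univ.erase a, ∑ c ∈ (univ.erase a).erase b,
            ∑ d ∈ ((univ.erase a).erase b).erase c,
            Y (π a) * Y (π b) * Y (π c) * Y (π d) :=
      calc (∑ a, ∑ b ∈ univ.erase a, ∑ c ∈ (univ.erase a).erase b,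
          ∑ d ∈ ((univ.erase a).erase b).erase c,
          (∑ π : Equiv.Perm (Fin n), Y (π a) * Y (π b) * Y (π c) * Y (π d)))
          = ∑ a, ∑ b ∈ univ.erase a, ∑ c ∈ (univ.erase a).erase b,
              ∑ π : Equiv.Perm (Fin n), ∑ d ∈ ((univ.erase a).erase b).erase c,
              Y (π a) * Y (π b) * Y (π c) * Y (π d) :=
            Finset.sum_congr rfl fun a _ => Finset.sum_congr rfl fun b _ =>
              Finset.sum_congr rfl fun c _ => Finset.sum_comm
        _ = ∑ a, ∑ b ∈ univ.erase a, ∑ π : Equiv.Perm (Fin n),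
              ∑ c ∈ (univ.erase a).erase b, ∑ d ∈ ((univ.erase a).erase b).erase c,
              Y (π a) * Y (π b) * Y (π c) * Y (π d) :=
            Finset.sum_congr rfl fun a _ => Finset.sum_congr rfl fun b _ => Finset.sum_comm
        _ = ∑ a, ∑ π : Equiv.Perm (Fin n), ∑ b ∈ univ.erase a,
              ∑ c ∈ (univ.erase a).erase b, ∑ d ∈ ((univ.erase a).erase b).erase c,
              Y (π a) * Y (π b) * Y (π c) * Y (π d) :=
            Finset.sum_congr rfl fun a _ => Finset.sum_comm
        _ = ∑ π : Equiv.Perm (Fin n), ∑ a, ∑ b ∈ univ.erase a,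
              ∑ c ∈ (univ.erase a).erase b, ∑ d ∈ ((univ.erase a).erase b).erase c,
              Y (π a) * Y (π b) * Y (π c) * Y (π d) := Finset.sum_comm
    rw [swap1]
    have perπ : ∀ π : Equiv.Perm (Fin n),
        (∑ a, ∑ b ∈ univ.erase a, ∑ c ∈ (univ.erase a).erase b,
          ∑ d ∈ ((univ.erase a).erase b).erase c,
          Y (π a) * Y (π b) * Y (π c) * Y (π d)) = 3 * s2 ^ 2 - 6 * s4 := by
      intro π
      have h0 : (∑ x, Y (π x)) = 0 := by rw [Equiv.sum_comp π Y, hY]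
      have h2 : (∑ x, Y (π x) ^ 2) = s2 := Equiv.sum_comp π fun x => Y x ^ 2
      have h3 : (∑ x, Y (π x) ^ 3) = ∑ x, Y x ^ 3 := Equiv.sum_comp π fun x => Y x ^ 3
      have h4 : (∑ x, Y (π x) ^ 4) = s4 := Equiv.sum_comp π fun x => Y x ^ 4
      rw [nested_eq (fun x => Y (π x)), h0, h2, h4]
      ring
    rw [Finset.sum_congr rfl fun π _ => perπ π, Finset.sum_const, Finset.card_univ,
      Fintype.card_perm, Fintype.card_fin, nsmul_eq_mul]
  -- combine
  have hNS : ((n : ℝ) * ((n : ℝ) - 1) * ((n : ℝ) - 2) * ((n : ℝ) - 3)) * S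
      = (Nat.factorial n : ℝ) * (3 * s2 ^ 2 - 6 * s4) := by rw [← hT1, hT2]
  have hn4 : (4 : ℝ) ≤ (n : ℝ) := by exact_mod_cast hn
  have hn0 : (n : ℝ) ≠ 0 := by linarith
  have hn1 : (n : ℝ) - 1 ≠ 0 := by intro h; linarith
  have hn2 : (n : ℝ) - 2 ≠ 0 := by intro h; linarith
  have hn3 : (n : ℝ) - 3 ≠ 0 := by intro h; linarith
  have hfac : (Nat.factorial n : ℝ) ≠ 0 := by
    exact_mod_cast Nat.factorial_ne_zero n
  have hSval : S = (Nat.factorial n : ℝ) * (3 * s2 ^ 2 - 6 * s4)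
      / ((n : ℝ) * ((n : ℝ) - 1) * ((n : ℝ) - 2) * ((n : ℝ) - 3)) := by
    field_simp
    linarith [hNS]
  rw [hSval]
  field_simp
end

section
/- Let f : (Fin n)⁴ → ℝ be such that for each fixed choice of three indices, summing f over the entire range of any single index gives zero (i.e., ∑_i f(i,j,k,ℓ) = 0 for all j,k,ℓ, and similarly for the other three positions). Then the sum of f over quadruples of pairwise distinct indices equals ∑_{i,j} (f(i,j,i,j) + f(i,j,j,i) + f(i,i,j,j)) − 6∑_i f(i,i,i,i). -/
lemma aux1 {n : ℕ} (g : Fin n → ℝ) (a : Fin n) :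
    ∑ l, (if l ≠ a then g l else 0) = (∑ l, g l) - g a := by
  have e : ∀ l : Fin n, (if l ≠ a then g l else 0) = g l - (if l = a then g l else 0) := by
    intro l; by_cases h : l = a <;> simp [h]
  rw [Finset.sum_congr rfl fun l _ => e l, Finset.sum_sub_distrib,
    Finset.sum_ite_eq' Finset.univ a g]
  simp

lemma aux2 {n : ℕ} (g : Fin n → ℝ) (a b : Fin n) (hab : a ≠ b) :
    ∑ l, (if l ≠ a ∧ l ≠ b then g l else 0) = (∑ l, g l) - g a - g b := by
  have e : ∀ l : Fin n, (if l ≠ a ∧ l ≠ b then g l else 0)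
      = (if l ≠ a then g l else 0) - (if l = b then g l else 0) := by
    intro l; by_cases h1 : l = a <;> by_cases h2 : l = b <;> simp_all
  rw [Finset.sum_congr rfl fun l _ => e l, Finset.sum_sub_distrib, aux1,
    Finset.sum_ite_eq' Finset.univ b g]
  simp

lemma aux3 {n : ℕ} (g : Fin n → ℝ) (a b c : Fin n) (hab : a ≠ b) (hac : a ≠ c) (hbc : b ≠ c) :
    ∑ l, (if l ≠ a ∧ l ≠ b ∧ l ≠ c then g l else 0) = (∑ l, g l) - g a - g b - g c := by
  have e : ∀ l : Fin n, (if l ≠ a ∧ l ≠ b ∧ l ≠ c then g l else 0)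
      = (if l ≠ a ∧ l ≠ b then g l else 0) - (if l = c then g l else 0) := by
    intro l; by_cases h1 : l = a <;> by_cases h2 : l = b <;> by_cases h3 : l = c <;> simp_all
  rw [Finset.sum_congr rfl fun l _ => e l, Finset.sum_sub_distrib, aux2 g a b hab,
    Finset.sum_ite_eq' Finset.univ c g]
  simp

lemma offdiag {n : ℕ} (g : Fin n → Fin n → ℝ) :
    ∑ i, ∑ j, (if i ≠ j then g i j else 0) = (∑ i, ∑ j, g i j) - ∑ i, g i i := by
  have e : ∀ i : Fin n, ∑ j, (if i ≠ j then g i j else 0) = (∑ j, g i j) - g i i := by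
    intro i
    have e2 : ∀ j : Fin n, (if i ≠ j then g i j else 0) = (if j ≠ i then g i j else 0) := by
      intro j; simp [ne_comm]
    rw [Finset.sum_congr rfl fun j _ => e2 j, aux1 (g i) i]
  rw [Finset.sum_congr rfl fun i _ => e i, Finset.sum_sub_distrib]

theorem stmt_7 (n : ℕ) (hn : 0 < n) (f : Fin n → Fin n → Fin n → Fin n → ℝ)
    (h1 : ∀ j k l, ∑ i, f i j k l = 0)
    (h2 : ∀ i k l, ∑ j, f i j k l = 0)
    (h3 : ∀ i j l, ∑ k, f i j k l = 0)
    (h4 : ∀ i j k, ∑ l, f i j k l = 0) :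
    (∑ i, ∑ j, ∑ k, ∑ l,
        if i ≠ j ∧ i ≠ k ∧ i ≠ l ∧ j ≠ k ∧ j ≠ l ∧ k ≠ l then f i j k l else 0)
      = (∑ i, ∑ j, (f i j i j + f i j j i + f i i j j)) - 6 * ∑ i, f i i i i := by
  -- Step 1: innermost sum over l
  have key : ∀ i j k : Fin n,
      (∑ l, if i ≠ j ∧ i ≠ k ∧ i ≠ l ∧ j ≠ k ∧ j ≠ l ∧ k ≠ l then f i j k l else 0)
        = if i ≠ j ∧ i ≠ k ∧ j ≠ k then -(f i j k i + f i j k j + f i j k k) else 0 := by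
    intro i j k
    by_cases h : i ≠ j ∧ i ≠ k ∧ j ≠ k
    · obtain ⟨hij, hik, hjk⟩ := h
      rw [if_pos ⟨hij, hik, hjk⟩]
      have e : ∀ l : Fin n,
          (if i ≠ j ∧ i ≠ k ∧ i ≠ l ∧ j ≠ k ∧ j ≠ l ∧ k ≠ l then f i j k l else 0)
            = (if l ≠ i ∧ l ≠ j ∧ l ≠ k then f i j k l else 0) := by
        intro l
        by_cases p1 : l = i <;> by_cases p2 : l = j <;> by_cases p3 : l = k <;>
          simp_all [ne_comm]
      rw [Finset.sum_congr rfl fun l _ => e l, aux3 _ i j k hij hik hjk, h4 i j k]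
      ring
    · rw [if_neg h]
      refine Finset.sum_eq_zero fun l _ => if_neg ?_
      tauto
  -- Step 2: sum over k
  have key2 : ∀ i j : Fin n,
      (∑ k, if i ≠ j ∧ i ≠ k ∧ j ≠ k then -(f i j k i + f i j k j + f i j k k) else 0)
        = if i ≠ j then
            (2 * f i j i i + f i j i j + f i j j i + 2 * f i j j j - ∑ k, f i j k k)
          else 0 := by
    intro i j
    by_cases hij : i ≠ j
    · rw [if_pos hij]
      have e : ∀ k : Fin n,
          (if i ≠ j ∧ i ≠ k ∧ j ≠ k then -(f i j k i + f i j k j + f i j k k) else 0)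
            = (if k ≠ i ∧ k ≠ j then -(f i j k i + f i j k j + f i j k k) else 0) := by
        intro k
        by_cases p1 : k = i <;> by_cases p2 : k = j <;> simp_all [ne_comm]
      rw [Finset.sum_congr rfl fun k _ => e k,
        aux2 (fun k => -(f i j k i + f i j k j + f i j k k)) i j hij]
      have : ∑ k, -(f i j k i + f i j k j + f i j k k)
          = -(∑ k, f i j k k) := by
        simp only [neg_add, Finset.sum_add_distrib, Finset.sum_neg_distrib, h3,
          neg_zero, zero_add]
      rw [this]
      ring
    · rw [if_neg hij]
      refine Finset.sum_eq_zero fun k _ => if_neg ?_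
      tauto
  calc (∑ i, ∑ j, ∑ k, ∑ l,
        if i ≠ j ∧ i ≠ k ∧ i ≠ l ∧ j ≠ k ∧ j ≠ l ∧ k ≠ l then f i j k l else 0)
      = ∑ i, ∑ j, (if i ≠ j then
            (2 * f i j i i + f i j i j + f i j j i + 2 * f i j j j - ∑ k, f i j k k)
          else 0) := by
        refine Finset.sum_congr rfl fun i _ => Finset.sum_congr rfl fun j _ => ?_
        rw [Finset.sum_congr rfl fun k _ => key i j k, key2 i j]
    _ = (∑ i, ∑ j, (2 * f i j i i + f i j i j + f i j j i + 2 * f i j j j - ∑ k, f i j k k))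
          - ∑ i, (2 * f i i i i + f i i i i + f i i i i + 2 * f i i i i - ∑ k, f i i k k) := by
        exact offdiag _
    _ = (∑ i, ∑ j, (f i j i j + f i j j i + f i i j j)) - 6 * ∑ i, f i i i i := by
        have t1 : ∑ i, ∑ j, f i j i i = (0 : ℝ) := by simp [h2]
        have t2 : ∑ i, ∑ j, f i j j j = (0 : ℝ) := by
          rw [Finset.sum_comm]; simp [h1]
        have t3 : ∑ i : Fin n, ∑ j, ∑ k, f i j k k = (0 : ℝ) := by
          refine Finset.sum_eq_zero fun i _ => ?_
          rw [Finset.sum_comm]; simp [h2]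
        simp only [Finset.sum_add_distrib, Finset.sum_sub_distrib, ← Finset.mul_sum]
        rw [t1, t2, t3]
        ring
end

section
/- Let f(i,j,k,ℓ) = Y_i Y_j Y_k Y_ℓ where Y : Fin n → ℝ has ∑ Y_i = 0. Then the sum of Y_i Y_j Y_k Y_ℓ over pairwise distinct quadruples (i,j,k,ℓ) equals 3(∑_i Y_i²)² − 6∑_i Y_i⁴. -/
theorem stmt_8 (n : ℕ) (hn : 1 ≤ n) (Y : Fin n → ℝ) (hY : ∑ i, Y i = 0) :
    (∑ i, ∑ j, ∑ k, ∑ l,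
        if i ≠ j ∧ i ≠ k ∧ i ≠ l ∧ j ≠ k ∧ j ≠ l ∧ k ≠ l
        then Y i * Y j * Y k * Y l else 0)
      = 3 * (∑ i, (Y i) ^ 2) ^ 2 - 6 * ∑ i, (Y i) ^ 4 := by
  classical
  set S2 : ℝ := ∑ i, Y i ^ 2 with hS2
  set S3 : ℝ := ∑ i, Y i ^ 3 with hS3
  set S4 : ℝ := ∑ i, Y i ^ 4 with hS4
  -- innermost sum
  have L : ∀ i j k : Fin n, i ≠ j → i ≠ k → j ≠ k →
      (∑ l, if i ≠ l ∧ j ≠ l ∧ k ≠ l then Y l else 0) = -(Y i + Y j + Y k) := by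
    intro i j k hij hik hjk
    have hpt : ∀ l : Fin n, (if i ≠ l ∧ j ≠ l ∧ k ≠ l then Y l else 0)
        = Y l - (if l = i then Y l else 0) - (if l = j then Y l else 0)
          - (if l = k then Y l else 0) := by
      intro l
      by_cases h1 : l = i <;> by_cases h2 : l = j <;> by_cases h3 : l = k <;>
        simp_all [eq_comm, Ne]
    rw [Finset.sum_congr rfl fun l _ => hpt l]
    simp [Finset.sum_sub_distrib, hY]
    ring
  -- third sum
  have K : ∀ i j : Fin n, i ≠ j →
      (∑ k, if i ≠ k ∧ j ≠ k then Y i * Y j * Y k * (-(Y i + Y j + Y k)) else 0)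
        = 2 * Y i ^ 3 * Y j + 2 * Y i ^ 2 * Y j ^ 2 + 2 * Y i * Y j ^ 3
          - Y i * Y j * S2 := by
    intro i j hij
    have hpt : ∀ k : Fin n, (if i ≠ k ∧ j ≠ k then Y i * Y j * Y k * (-(Y i + Y j + Y k)) else 0)
        = Y i * Y j * Y k * (-(Y i + Y j + Y k))
          - (if k = i then Y i * Y j * Y k * (-(Y i + Y j + Y k)) else 0)
          - (if k = j then Y i * Y j * Y k * (-(Y i + Y j + Y k)) else 0) := by
      intro k
      by_cases h1 : k = i <;> by_cases h2 : k = j <;> simp_all [eq_comm, Ne]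
    rw [Finset.sum_congr rfl fun k _ => hpt k]
    have hfull : (∑ k, Y i * Y j * Y k * (-(Y i + Y j + Y k)))
        = -(Y i * Y j * (Y i + Y j)) * (∑ k, Y k) + (-(Y i * Y j)) * S2 := by
      have hpt2 : ∀ k : Fin n, Y i * Y j * Y k * (-(Y i + Y j + Y k))
          = (-(Y i * Y j * (Y i + Y j))) * Y k + (-(Y i * Y j)) * Y k ^ 2 := fun k => by ring
      rw [Finset.sum_congr rfl fun k _ => hpt2 k, Finset.sum_add_distrib,
        ← Finset.mul_sum, ← Finset.mul_sum, ← hS2]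
    simp only [Finset.sum_sub_distrib, hfull, hY, Finset.sum_ite_eq']
    simp
    ring
  -- second sum
  have J : ∀ i : Fin n,
      (∑ j, if i ≠ j then 2 * Y i ^ 3 * Y j + 2 * Y i ^ 2 * Y j ^ 2 + 2 * Y i * Y j ^ 3
          - Y i * Y j * S2 else 0)
        = 3 * Y i ^ 2 * S2 + 2 * Y i * S3 - 6 * Y i ^ 4 := by
    intro i
    have hpt : ∀ j : Fin n,
        (if i ≠ j then 2 * Y i ^ 3 * Y j + 2 * Y i ^ 2 * Y j ^ 2 + 2 * Y i * Y j ^ 3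
            - Y i * Y j * S2 else 0)
        = (2 * Y i ^ 3 * Y j + 2 * Y i ^ 2 * Y j ^ 2 + 2 * Y i * Y j ^ 3 - Y i * Y j * S2)
          - (if j = i then 2 * Y i ^ 3 * Y j + 2 * Y i ^ 2 * Y j ^ 2 + 2 * Y i * Y j ^ 3
              - Y i * Y j * S2 else 0) := by
      intro j
      by_cases h1 : j = i <;> simp_all [eq_comm, Ne]
    rw [Finset.sum_congr rfl fun j _ => hpt j]
    have hfull : (∑ j, (2 * Y i ^ 3 * Y j + 2 * Y i ^ 2 * Y j ^ 2 + 2 * Y i * Y j ^ 3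
        - Y i * Y j * S2))
        = (2 * Y i ^ 3 - Y i * S2) * (∑ j, Y j) + (2 * Y i ^ 2) * S2 + (2 * Y i) * S3 := by
      have hpt2 : ∀ j : Fin n, (2 * Y i ^ 3 * Y j + 2 * Y i ^ 2 * Y j ^ 2 + 2 * Y i * Y j ^ 3
          - Y i * Y j * S2)
          = (2 * Y i ^ 3 - Y i * S2) * Y j + (2 * Y i ^ 2) * Y j ^ 2 + (2 * Y i) * Y j ^ 3 :=
        fun j => by ring
      rw [Finset.sum_congr rfl fun j _ => hpt2 j, Finset.sum_add_distrib,
        Finset.sum_add_distrib, ← Finset.mul_sum, ← Finset.mul_sum, ← Finset.mul_sum,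
        ← hS2, ← hS3]
    simp only [Finset.sum_sub_distrib, hfull, hY, Finset.sum_ite_eq']
    simp
    ring
  -- now chain everything
  have step1 : (∑ i, ∑ j, ∑ k, ∑ l,
        if i ≠ j ∧ i ≠ k ∧ i ≠ l ∧ j ≠ k ∧ j ≠ l ∧ k ≠ l
        then Y i * Y j * Y k * Y l else 0)
      = ∑ i, ∑ j, ∑ k, (if i ≠ j ∧ i ≠ k ∧ j ≠ k then
          Y i * Y j * Y k * (-(Y i + Y j + Y k)) else 0) := by
    refine Finset.sum_congr rfl fun i _ => Finset.sum_congr rfl fun j _ =>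
      Finset.sum_congr rfl fun k _ => ?_
    by_cases h : i ≠ j ∧ i ≠ k ∧ j ≠ k
    · rw [if_pos h, ← L i j k h.1 h.2.1 h.2.2, Finset.mul_sum]
      refine Finset.sum_congr rfl fun l _ => ?_
      by_cases h' : i ≠ l ∧ j ≠ l ∧ k ≠ l
      · rw [if_pos h', if_pos ⟨h.1, h.2.1, h'.1, h.2.2, h'.2.1, h'.2.2⟩]
      · rw [if_neg h', mul_zero, if_neg (by tauto)]
    · rw [if_neg h]
      refine Finset.sum_eq_zero fun l _ => by rw [if_neg (by tauto)]
  have step2 : (∑ i, ∑ j, ∑ k, (if i ≠ j ∧ i ≠ k ∧ j ≠ k then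
          Y i * Y j * Y k * (-(Y i + Y j + Y k)) else 0))
      = ∑ i, ∑ j, (if i ≠ j then 2 * Y i ^ 3 * Y j + 2 * Y i ^ 2 * Y j ^ 2 + 2 * Y i * Y j ^ 3
          - Y i * Y j * S2 else 0) := by
    refine Finset.sum_congr rfl fun i _ => Finset.sum_congr rfl fun j _ => ?_
    by_cases h : i ≠ j
    · rw [if_pos h, ← K i j h]
      refine Finset.sum_congr rfl fun k _ => ?_
      by_cases h' : i ≠ k ∧ j ≠ k
      · rw [if_pos h', if_pos ⟨h, h'.1, h'.2⟩]
      · rw [if_neg h', if_neg (by tauto)]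
    · rw [if_neg h]
      refine Finset.sum_eq_zero fun k _ => by rw [if_neg (by tauto)]
  have step3 : (∑ i, ∑ j, (if i ≠ j then 2 * Y i ^ 3 * Y j + 2 * Y i ^ 2 * Y j ^ 2
          + 2 * Y i * Y j ^ 3 - Y i * Y j * S2 else 0))
      = ∑ i, (3 * Y i ^ 2 * S2 + 2 * Y i * S3 - 6 * Y i ^ 4) := by
    exact Finset.sum_congr rfl fun i _ => J i
  rw [step1, step2, step3]
  have hfinal : (∑ i, (3 * Y i ^ 2 * S2 + 2 * Y i * S3 - 6 * Y i ^ 4))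
      = (3 * S2) * S2 + (2 * S3) * (∑ i, Y i) + (-6) * S4 := by
    have hpt2 : ∀ i : Fin n, (3 * Y i ^ 2 * S2 + 2 * Y i * S3 - 6 * Y i ^ 4)
        = (3 * S2) * Y i ^ 2 + (2 * S3) * Y i + (-6) * Y i ^ 4 := fun i => by ring
    rw [Finset.sum_congr rfl fun i _ => hpt2 i, Finset.sum_add_distrib,
      Finset.sum_add_distrib, ← Finset.mul_sum, ← Finset.mul_sum, ← Finset.mul_sum,
      ← hS2, ← hS4]
  rw [hfinal, hY]
  ring
end

section
/- Let X, Y : Fin n → ℝ, both centered, and let π be a uniformly random permutation. Define T̃ = (1/n)∑_i X_i Y_{π(i)}. Then Var(T̃) = μ₂ X̄ /(n-1), where μ₂ = (1/n)∑ Y_i² and X̄ = (1/n)∑ X_i². -/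
/-!
Expanding the square, the second moment of `∑ i, X i * Y (π i)` is `∑ i j, X i * X j * S i j`
with `S i j = ∑ π, Y (π i) * Y (π j)`. Composing with transpositions shows that `S` is constant on
the diagonal, where it equals `(n - 1)! * ∑ Y²`, and constant off it; since every row of `S` sums to
zero (`∑ Y = 0`), the off-diagonal value is `-(n - 2)! * ∑ Y²`. So `S` is a multiple of `n • 1 - J`
with `J` the all-ones matrix, and `∑ X = 0` kills the `J` part.
-/

open Finset
open scoped Nat

namespace Equiv.Perm

variable {α M R : Type*} [Fintype α] [DecidableEq α]

theorem sum_apply_eq_sum_apply [AddCommMonoid M] (f : α → M) (i j : α) :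
    ∑ σ : Perm α, f (σ i) = ∑ σ : Perm α, f (σ j) :=
  Fintype.sum_equiv (Equiv.mulRight (swap i j)) _ _ fun σ => by simp

theorem card_smul_sum_apply [AddCommMonoid M] (f : α → M) (i : α) :
    Fintype.card α • ∑ σ : Perm α, f (σ i) = (Fintype.card α)! • ∑ k, f k :=
  calc Fintype.card α • ∑ σ : Perm α, f (σ i) = ∑ j : α, ∑ σ : Perm α, f (σ j) := by
        rw [← card_univ, ← sum_const]
        exact sum_congr rfl fun j _ => sum_apply_eq_sum_apply f i j
    _ = ∑ σ : Perm α, ∑ j, f (σ j) := sum_comm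
    _ = ∑ σ : Perm α, ∑ k, f k := sum_congr rfl fun σ _ => Equiv.sum_comp σ f
    _ = (Fintype.card α)! • ∑ k, f k := by rw [sum_const, card_univ, Fintype.card_perm]

theorem sum_apply_apply_eq_of_ne [AddCommMonoid M] (g : α → α → M) {i j j' : α}
    (hj : j ≠ i) (hj' : j' ≠ i) :
    ∑ σ : Perm α, g (σ i) (σ j) = ∑ σ : Perm α, g (σ i) (σ j') :=
  Fintype.sum_equiv (Equiv.mulRight (swap j j')) _ _ fun σ => by
    simp [swap_apply_of_ne_of_ne hj.symm hj'.symm]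

theorem sum_sum_mul_apply_eq_zero [CommSemiring R] {X : α → R} (hX : ∑ i, X i = 0)
    (Y : α → R) : ∑ σ : Perm α, ∑ i, X i * Y (σ i) = 0 := by
  rcases isEmpty_or_nonempty α with _ | ⟨⟨i₀⟩⟩
  · simp
  calc ∑ σ : Perm α, ∑ i, X i * Y (σ i) = ∑ i, X i * ∑ σ : Perm α, Y (σ i₀) := by
        rw [sum_comm]
        exact sum_congr rfl fun i _ => by rw [← mul_sum, sum_apply_eq_sum_apply Y i i₀]
    _ = 0 := by rw [← sum_mul, hX, zero_mul]

theorem card_mul_sum_apply_mul_apply [CommRing R] {Y : α → R} (hY : ∑ k, Y k = 0) (i j : α) :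
    (Fintype.card α : R) * (Fintype.card α - 1) * ∑ σ : Perm α, Y (σ i) * Y (σ j)
      = (Fintype.card α)! * (∑ k, Y k ^ 2) * (Fintype.card α * (if i = j then 1 else 0) - 1) := by
  set n := Fintype.card α
  have hdiag : (n : R) * ∑ σ : Perm α, Y (σ i) * Y (σ i) = n ! * ∑ k, Y k ^ 2 := by
    simpa only [nsmul_eq_mul, Nat.cast_id, ← sq] using card_smul_sum_apply (fun k => Y k ^ 2) i
  have hrow : ∑ j, ∑ σ : Perm α, Y (σ i) * Y (σ j) = 0 := by
    rw [sum_comm]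
    exact sum_eq_zero fun σ _ => by rw [← mul_sum, Equiv.sum_comp σ Y, hY, mul_zero]
  split_ifs with hij
  · subst hij
    linear_combination ((n : R) - 1) * hdiag
  have hoff : ((n : R) - 1) * ∑ σ : Perm α, Y (σ i) * Y (σ j)
      = -∑ σ : Perm α, Y (σ i) * Y (σ i) := by
    rw [← add_sum_erase _ _ (mem_univ i),
      sum_congr rfl fun k hk => sum_apply_apply_eq_of_ne (fun a b => Y a * Y b)
        (ne_of_mem_erase hk) (Ne.symm hij), sum_const, card_erase_of_mem (mem_univ i),
      card_univ, nsmul_eq_mul, Nat.cast_pred (Fintype.card_pos_iff.mpr ⟨i⟩)] at hrow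
    linear_combination hrow
  linear_combination (n : R) * hoff - hdiag

theorem card_mul_sum_sq_sum_mul_apply [CommRing R] {X Y : α → R} (hX : ∑ i, X i = 0)
    (hY : ∑ k, Y k = 0) :
    (Fintype.card α : R) * (Fintype.card α - 1) * ∑ σ : Perm α, (∑ i, X i * Y (σ i)) ^ 2
      = Fintype.card α * (Fintype.card α)! * (∑ k, Y k ^ 2) * ∑ i, X i ^ 2 := by
  set n := Fintype.card α
  calc (n : R) * (n - 1) * ∑ σ : Perm α, (∑ i, X i * Y (σ i)) ^ 2
      = ∑ i, ∑ j, X i * X j * (n * (n - 1) * ∑ σ : Perm α, Y (σ i) * Y (σ j)) := by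
        simp_rw [sq, sum_mul_sum, mul_sum]
        rw [sum_comm]
        refine sum_congr rfl fun i _ => ?_
        rw [sum_comm]
        exact sum_congr rfl fun j _ => sum_congr rfl fun σ _ => by ring
    _ = ∑ i, ∑ j, X i * X j * (n ! * (∑ k, Y k ^ 2) * (n * (if i = j then 1 else 0) - 1)) :=
        sum_congr rfl fun i _ => sum_congr rfl fun j _ =>
          congrArg (X i * X j * ·) (card_mul_sum_apply_mul_apply hY i j)
    _ = ∑ i, n ! * (∑ k, Y k ^ 2) * (X i * (n * X i - ∑ j, X j)) := by
        refine sum_congr rfl fun i _ => ?_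
        simp only [mul_sub, mul_ite, mul_one, mul_zero, sum_sub_distrib, sum_ite_eq, mem_univ,
          if_true]
        rw [← sum_mul, ← mul_sum]
        ring
    _ = n ! * (∑ k, Y k ^ 2) * ∑ i, X i * (n * X i - ∑ j, X j) := (mul_sum ..).symm
    _ = n * n ! * (∑ k, Y k ^ 2) * ∑ i, X i ^ 2 := by
        simp only [hX, sub_zero, mul_left_comm (X _), ← sq, ← mul_sum]
        ring

end Equiv.Perm

theorem stmt_9 (n : ℕ) (hn : 2 ≤ n) (X Y : Fin n → ℝ)
    (hX : ∑ i, X i = 0) (hY : ∑ i, Y i = 0) :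
    (∑ π : Equiv.Perm (Fin n),
        (((1 / (n : ℝ)) * ∑ i, X i * Y (π i))
          - (∑ σ : Equiv.Perm (Fin n), (1 / (n : ℝ)) * ∑ i, X i * Y (σ i))
              / (Nat.factorial n : ℝ)) ^ 2)
      / (Nat.factorial n : ℝ)
    = ((1 / (n : ℝ)) * ∑ i, (Y i) ^ 2) * ((1 / (n : ℝ)) * ∑ i, (X i) ^ 2)
        / ((n : ℝ) - 1) := by
  have hmean : ∑ σ : Equiv.Perm (Fin n), (1 / (n : ℝ)) * ∑ i, X i * Y (σ i) = 0 := by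
    rw [← mul_sum, Equiv.Perm.sum_sum_mul_apply_eq_zero hX, mul_zero]
  have hsq := Equiv.Perm.card_mul_sum_sq_sum_mul_apply hX hY
  rw [Fintype.card_fin] at hsq
  have hn1 : (n : ℝ) - 1 ≠ 0 := by
    have : (2 : ℝ) ≤ n := by exact_mod_cast hn
    linarith
  have hn0 : (n : ℝ) ≠ 0 := by positivity
  rw [hmean, zero_div]
  simp only [sub_zero, mul_pow, ← mul_sum]
  field_simp
  apply mul_left_cancel₀ hn0
  linear_combination hsq
end

section
/- Let X ∈ ℝ^{n×p} and Y ∈ ℝⁿ with columns of X and Y centered. Let W ∈ ℝ^{n×(n−1)} satisfy Wᵀ W = I_{n−1} and Wᵀ 1_n = 0. Let Q be Haar-distributed on O(n−1) and set Ỹ = W Q Wᵀ Y and β̃ = (1/n) Xᵀ Ỹ. Then E[β̃] = 0 and E[β̃ β̃ᵀ] = (μ₂/(n(n−1))) (WᵀX)ᵀ (WᵀX), where μ₂ = (1/n)∑ Y_i². In particular E[β̃_g β̃_h] = μ₂ X̄_{gh}/(n−1) with X̄_{gh} = (1/n)∑_i X_{gi} X_{hi}, matching the permutation moments. -/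
/-!
With `v = Wᵀ Y` and `c_g = Wᵀ X_g` one has `n β̃_g = c_g ⬝ Q v`. Invariance of the Haar measure
under left multiplication by row sign changes and row permutations gives `E[Q_ia] = 0` and
`E[Q_ia Q_jb] = δ_ij δ_ab / (n - 1)`, the constant coming from `∑_i Q_ia² = 1`; hence
`E[(c_g ⬝ Q v)(c_h ⬝ Q v)] = (c_g ⬝ c_h)(v ⬝ v) / (n - 1)`. Finally, with `J` the all-ones
matrix, `W Wᵀ = 1 - J / n`: since `J W = 0`, the difference of the two is a symmetric idempotent,
and its trace is `(n - 1) - (n - 1) = 0`, so it vanishes. Thus `Wᵀ` preserves inner products of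
centered vectors, giving `v ⬝ v = ∑ Y_i²` and `c_g ⬝ c_h = ∑ X_ig X_ih`.
-/

open MeasureTheory Matrix

namespace Matrix

variable {ι κ ρ : Type*} [Fintype ι] [Fintype κ]

theorem dotProduct_mulVec_eq_sum {R : Type*} [CommSemiring R] (u : ι → R) (Q : Matrix ι ι R)
    (v : ι → R) :
    u ⬝ᵥ Q *ᵥ v = ∑ i, ∑ a, u i * v a * Q i a := by
  simp only [dotProduct, mulVec, Finset.mul_sum]
  exact Finset.sum_congr rfl fun i _ => Finset.sum_congr rfl fun a _ => by ring

variable [DecidableEq ι] [DecidableEq κ]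

theorem mul_transpose_eq_one_sub_of_orthonormal_columns (W : Matrix ι κ ℝ) (hW : Wᵀ * W = 1)
    (hW1 : Wᵀ *ᵥ (fun _ => 1) = 0) (hcard : Fintype.card κ + 1 = Fintype.card ι) :
    W * Wᵀ = 1 - (Fintype.card ι : ℝ)⁻¹ • of (fun _ _ => 1) := by
  set J : Matrix ι ι ℝ := of fun _ _ => 1
  set B := W * Wᵀ
  have hn : (Fintype.card ι : ℝ) ≠ 0 := by rw [← hcard]; positivity
  have hJJ : (Fintype.card ι : ℝ)⁻¹ • J * (Fintype.card ι : ℝ)⁻¹ • J =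
      (Fintype.card ι : ℝ)⁻¹ • J := by
    ext
    simp only [smul_of, mul_apply, of_apply, Pi.smul_apply, smul_eq_mul, mul_one,
      Finset.sum_const, Finset.card_univ, nsmul_eq_mul, smul_apply, J]
    field_simp
  have hcol : ∀ a, ∑ k, W k a = 0 := fun a => by
    simpa [mulVec, dotProduct] using congr_fun hW1 a
  have hJB : J * B = 0 := by
    have hJW : J * W = 0 := by ext; simp [J, mul_apply, hcol]
    rw [← Matrix.mul_assoc, hJW, Matrix.zero_mul]
  have hBJ : B * J = 0 := by
    have hWtJ : Wᵀ * J = 0 := by ext; simp [J, mul_apply, hcol]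
    rw [Matrix.mul_assoc, hWtJ, Matrix.mul_zero]
  have hBB : B * B = B := by rw [Matrix.mul_assoc, ← Matrix.mul_assoc Wᵀ, hW, Matrix.one_mul]
  set P := 1 - (Fintype.card ι : ℝ)⁻¹ • J - B
  have hPt : Pᵀ = P := by
    simp only [P, B, transpose_sub, transpose_one, transpose_smul, transpose_mul,
      transpose_transpose]
    rfl
  have hPP : P * P = P := by
    simp only [P, sub_mul, mul_sub, Matrix.one_mul, Matrix.mul_one, hJJ, hBB, smul_mul,
      Matrix.mul_smul, hJB, hBJ, smul_zero]
    abel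
  have htr : P.trace = 0 := by
    have hJtr : J.trace = Fintype.card ι := by simp [J, trace]
    rw [trace_sub, trace_sub, trace_smul, hJtr, smul_eq_mul, inv_mul_cancel₀ hn, trace_one,
      trace_mul_comm, hW, trace_one, ← hcard]
    push_cast
    ring
  have hP : (Pᴴ * P).trace = 0 := by
    rw [conjTranspose_eq_transpose_of_trivial, hPt, hPP, htr]
  rw [trace_conjTranspose_mul_self_eq_zero_iff, sub_eq_zero] at hP
  exact hP.symm

theorem transpose_mulVec_dotProduct_self_of_sum_eq_zero {W : Matrix ι κ ℝ} (hW : Wᵀ * W = 1)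
    (hW1 : Wᵀ *ᵥ (fun _ => 1) = 0) (hcard : Fintype.card κ + 1 = Fintype.card ι)
    {w : ι → ℝ} (hw : ∑ i, w i = 0) :
    (Wᵀ *ᵥ w) ⬝ᵥ (Wᵀ *ᵥ w) = w ⬝ᵥ w := by
  have hJw : (of fun _ _ => 1 : Matrix ι ι ℝ) *ᵥ w = 0 := by ext; simp [mulVec, dotProduct, hw]
  rw [dotProduct_mulVec, vecMul_transpose, mulVec_mulVec,
    mul_transpose_eq_one_sub_of_orthonormal_columns W hW hW1 hcard, sub_mulVec, one_mulVec,
    smul_mulVec, hJw, smul_zero, sub_zero]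

theorem transpose_mul_transpose_mul_of_sum_eq_zero [Fintype ρ] {W : Matrix ι κ ℝ}
    (hW : Wᵀ * W = 1) (hW1 : Wᵀ *ᵥ (fun _ => 1) = 0) (hcard : Fintype.card κ + 1 = Fintype.card ι)
    {X : Matrix ι ρ ℝ} (hX : ∀ g, ∑ i, X i g = 0) :
    (Wᵀ * X)ᵀ * (Wᵀ * X) = Xᵀ * X := by
  have hJX : (of fun _ _ => 1 : Matrix ι ι ℝ) * X = 0 := by ext; simp [mul_apply, hX]
  rw [transpose_mul, transpose_transpose, Matrix.mul_assoc, ← Matrix.mul_assoc W,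
    mul_transpose_eq_one_sub_of_orthonormal_columns W hW hW1 hcard, Matrix.sub_mul,
    Matrix.one_mul, smul_mul, hJX, smul_zero, sub_zero]

end Matrix

namespace Matrix.orthogonalGroup

variable {ι : Type*} [Fintype ι] [DecidableEq ι]

instance : CompactSpace (orthogonalGroup ι ℝ) :=
  isCompact_iff_compactSpace.mp <|
    (isCompact_univ_pi fun _ => isCompact_univ_pi fun _ => isCompact_Icc (a := -1) (b := 1))
      |>.of_isClosed_subset (isClosed_unitary (R := Matrix ι ι ℝ))
        fun _ hU i _ j _ => abs_le.mp (entry_norm_bound_of_unitary hU i j)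

def rowNeg (i : ι) : orthogonalGroup ι ℝ :=
  ⟨diagonal (Function.update 1 i (-1)), by
    rw [mem_orthogonalGroup_iff, diagonal_transpose, diagonal_mul_diagonal, ← diagonal_one]
    congr 1
    ext k
    rcases eq_or_ne k i with rfl | hk <;> simp [*]⟩

def permRows (σ : Equiv.Perm ι) : orthogonalGroup ι ℝ :=
  ⟨σ.permMatrix ℝ, by
    rw [mem_orthogonalGroup_iff, transpose_permMatrix, ← permMatrix_mul, inv_mul_cancel,
      permMatrix_one]⟩

lemma rowNeg_mul_apply (i : ι) (Q : orthogonalGroup ι ℝ) (k a : ι) :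
    (rowNeg i * Q) k a = (if k = i then -1 else 1) * Q k a := by
  simp [rowNeg, diagonal_mul, Function.update_apply]

lemma permRows_mul_apply (σ : Equiv.Perm ι) (Q : orthogonalGroup ι ℝ) (k a : ι) :
    (permRows σ * Q) k a = Q (σ k) a := by
  simp [permRows, PEquiv.toMatrix_toPEquiv_mul]

@[fun_prop]
lemma continuous_entry (i a : ι) : Continuous fun Q : orthogonalGroup ι ℝ => Q i a :=
  continuous_subtype_val.matrix_elem i a

lemma sum_entry_mul_entry (Q : orthogonalGroup ι ℝ) (a b : ι) :
    ∑ i, Q i a * Q i b = (1 : Matrix ι ι ℝ) a b := by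
  rw [← UnitaryGroup.star_mul_self Q, mul_apply]
  rfl

variable [MeasurableSpace (orthogonalGroup ι ℝ)] [BorelSpace (orthogonalGroup ι ℝ)]
  (μ : Measure (orthogonalGroup ι ℝ))

lemma integrable_of_continuous [IsFiniteMeasure μ] {f : orthogonalGroup ι ℝ → ℝ}
    (hf : Continuous f) : Integrable f μ :=
  hf.integrable_of_hasCompactSupport (HasCompactSupport.of_compactSpace f)

variable [μ.IsMulLeftInvariant]

lemma integral_entry (i a : ι) : ∫ Q, Q i a ∂μ = 0 := by
  have h := integral_mul_left_eq_self (μ := μ) (fun Q => Q i a) (rowNeg i)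
  simp only [rowNeg_mul_apply, ↓reduceIte, neg_one_mul, integral_neg] at h
  linarith

lemma integral_dotProduct_mulVec [IsFiniteMeasure μ] (u v : ι → ℝ) :
    ∫ Q, u ⬝ᵥ (Q : Matrix ι ι ℝ) *ᵥ v ∂μ = 0 := by
  simp_rw [dotProduct_mulVec_eq_sum]
  rw [integral_finsetSum _ fun i _ => integrable_of_continuous μ (by fun_prop)]
  refine Finset.sum_eq_zero fun i _ => ?_
  rw [integral_finsetSum _ fun a _ => integrable_of_continuous μ (by fun_prop)]
  refine Finset.sum_eq_zero fun a _ => ?_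
  rw [integral_const_mul, integral_entry, mul_zero]

lemma integral_entry_mul_entry_of_ne {i j : ι} (hij : i ≠ j) (a b : ι) :
    ∫ Q, Q i a * Q j b ∂μ = 0 := by
  have h := integral_mul_left_eq_self (μ := μ) (fun Q => Q i a * Q j b) (rowNeg i)
  simp only [rowNeg_mul_apply, ↓reduceIte, if_neg hij.symm, one_mul, neg_mul,
    integral_neg] at h
  linarith

lemma integral_entry_mul_entry_eq (i j a b : ι) :
    ∫ Q, Q i a * Q i b ∂μ = ∫ Q, Q j a * Q j b ∂μ := by
  simpa only [permRows_mul_apply, Equiv.swap_apply_right] using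
    (integral_mul_left_eq_self (μ := μ) (fun Q => Q i a * Q i b) (permRows (Equiv.swap j i))).symm

variable [IsProbabilityMeasure μ]

lemma integral_entry_mul_entry (i j a b : ι) :
    ∫ Q, Q i a * Q j b ∂μ = (1 : Matrix ι ι ℝ) i j * (1 : Matrix ι ι ℝ) a b / Fintype.card ι := by
  obtain rfl | hij := eq_or_ne i j
  · have hcard : (Fintype.card ι : ℝ) ≠ 0 :=
      Nat.cast_ne_zero.mpr (Fintype.card_pos_iff.mpr ⟨i⟩).ne'
    have hsum : ∑ k, ∫ Q, Q k a * Q k b ∂μ = (1 : Matrix ι ι ℝ) a b := by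
      rw [← integral_finsetSum _ fun k _ => integrable_of_continuous μ (by fun_prop)]
      simp [sum_entry_mul_entry]
    simp only [integral_entry_mul_entry_eq μ _ i, Finset.sum_const, Finset.card_univ,
      nsmul_eq_mul] at hsum
    rw [one_apply_eq, one_mul, ← hsum]
    field_simp
  · rw [integral_entry_mul_entry_of_ne μ hij, one_apply_ne hij, zero_mul, zero_div]

lemma integral_entry_mul_dotProduct_mulVec (i a : ι) (u v : ι → ℝ) :
    ∫ Q, Q i a * (u ⬝ᵥ (Q : Matrix ι ι ℝ) *ᵥ v) ∂μ = u i * v a / Fintype.card ι := by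
  simp_rw [dotProduct_mulVec_eq_sum, Finset.mul_sum]
  rw [integral_finsetSum _ fun j _ => integrable_of_continuous μ (by fun_prop)]
  calc ∑ j, ∫ Q, ∑ b, Q i a * (u j * v b * Q j b) ∂μ
      = ∑ j, ∑ b, u j * v b * ((1 : Matrix ι ι ℝ) i j * (1 : Matrix ι ι ℝ) a b /
          Fintype.card ι) := by
        refine Finset.sum_congr rfl fun j _ => ?_
        rw [integral_finsetSum _ fun b _ => integrable_of_continuous μ (by fun_prop)]
        refine Finset.sum_congr rfl fun b _ => ?_
        rw [← integral_entry_mul_entry μ i j a b, ← integral_const_mul]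
        simp only [mul_left_comm]
    _ = u i * v a / Fintype.card ι := by
        simp only [one_apply, mul_ite, mul_one, mul_zero, ite_div, one_div, zero_div,
          Finset.sum_ite_eq, Finset.mem_univ, ↓reduceIte]
        ring

lemma integral_dotProduct_mulVec_mul_dotProduct_mulVec (u v u' v' : ι → ℝ) :
    ∫ Q, (u ⬝ᵥ (Q : Matrix ι ι ℝ) *ᵥ v) * (u' ⬝ᵥ (Q : Matrix ι ι ℝ) *ᵥ v') ∂μ =
      (u ⬝ᵥ u') * (v ⬝ᵥ v') / Fintype.card ι := by
  simp_rw [dotProduct_mulVec_eq_sum u, Finset.sum_mul]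
  rw [integral_finsetSum _ fun i _ => integrable_of_continuous μ (by fun_prop)]
  calc ∑ i, ∫ Q, ∑ a, u i * v a * Q i a * (u' ⬝ᵥ (Q : Matrix ι ι ℝ) *ᵥ v') ∂μ
      = ∑ i, ∑ a, u i * v a * (u' i * v' a / Fintype.card ι) := by
        refine Finset.sum_congr rfl fun i _ => ?_
        rw [integral_finsetSum _ fun a _ => integrable_of_continuous μ (by fun_prop)]
        refine Finset.sum_congr rfl fun a _ => ?_
        rw [← integral_entry_mul_dotProduct_mulVec μ i a, ← integral_const_mul]
        simp only [mul_assoc]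
    _ = (u ⬝ᵥ u') * (v ⬝ᵥ v') / Fintype.card ι := by
        simp only [dotProduct, Finset.sum_mul_sum, Finset.sum_div]
        exact Finset.sum_congr rfl fun i _ => Finset.sum_congr rfl fun a _ => by ring

end Matrix.orthogonalGroup

theorem stmt_17_general (n p : ℕ)
    (X : Matrix (Fin n) (Fin p) ℝ) (Y : Fin n → ℝ)
    (hX : ∀ g : Fin p, ∑ i, X i g = 0) (hY : ∑ i, Y i = 0)
    (W : Matrix (Fin n) (Fin (n - 1)) ℝ)
    (hW : Wᵀ * W = 1) (hW1 : Wᵀ *ᵥ (fun _ => 1) = 0)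
    [MeasurableSpace (orthogonalGroup (Fin (n - 1)) ℝ)]
    [BorelSpace (orthogonalGroup (Fin (n - 1)) ℝ)]
    (μ : Measure (orthogonalGroup (Fin (n - 1)) ℝ))
    [μ.IsHaarMeasure] [IsProbabilityMeasure μ] :
    (∀ g : Fin p,
        ∫ Q, (1 / (n : ℝ))
            * (Xᵀ *ᵥ (W *ᵥ ((Q : Matrix (Fin (n - 1)) (Fin (n - 1)) ℝ) *ᵥ (Wᵀ *ᵥ Y)))) g ∂μ
          = 0) ∧
    (∀ g h : Fin p,
        ∫ Q, ((1 / (n : ℝ))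
              * (Xᵀ *ᵥ (W *ᵥ ((Q : Matrix (Fin (n - 1)) (Fin (n - 1)) ℝ) *ᵥ (Wᵀ *ᵥ Y)))) g)
            * ((1 / (n : ℝ))
              * (Xᵀ *ᵥ (W *ᵥ ((Q : Matrix (Fin (n - 1)) (Fin (n - 1)) ℝ) *ᵥ (Wᵀ *ᵥ Y)))) h) ∂μ
          = ((1 / (n : ℝ)) * ∑ i, (Y i) ^ 2) / ((n : ℝ) * ((n : ℝ) - 1))
              * ((Wᵀ * X)ᵀ * (Wᵀ * X)) g h) ∧
    (∀ g h : Fin p,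
        ∫ Q, ((1 / (n : ℝ))
              * (Xᵀ *ᵥ (W *ᵥ ((Q : Matrix (Fin (n - 1)) (Fin (n - 1)) ℝ) *ᵥ (Wᵀ *ᵥ Y)))) g)
            * ((1 / (n : ℝ))
              * (Xᵀ *ᵥ (W *ᵥ ((Q : Matrix (Fin (n - 1)) (Fin (n - 1)) ℝ) *ᵥ (Wᵀ *ᵥ Y)))) h) ∂μ
          = ((1 / (n : ℝ)) * ∑ i, (Y i) ^ 2)
              * ((1 / (n : ℝ)) * ∑ i, X i g * X i h) / ((n : ℝ) - 1)) := by
  obtain rfl | hn := n.eq_zero_or_pos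
  · simp
  have hcard : Fintype.card (Fin (n - 1)) + 1 = Fintype.card (Fin n) := by simp; omega
  have hm : (Fintype.card (Fin (n - 1)) : ℝ) = n - 1 := by simp [Nat.cast_pred hn]
  set C := Wᵀ * X
  have hβ : ∀ (Q : orthogonalGroup (Fin (n - 1)) ℝ) g,
      (Xᵀ *ᵥ (W *ᵥ ((Q : Matrix (Fin (n - 1)) (Fin (n - 1)) ℝ) *ᵥ (Wᵀ *ᵥ Y)))) g =
        Cᵀ g ⬝ᵥ (Q : Matrix (Fin (n - 1)) (Fin (n - 1)) ℝ) *ᵥ (Wᵀ *ᵥ Y) := by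
    intro Q g
    rw [mulVec_mulVec, mulVec_mulVec, transpose_mul, transpose_transpose, ← mulVec_mulVec]
    rfl
  have hcov : ∀ g h, ∫ Q, ((1 / (n : ℝ))
        * (Xᵀ *ᵥ (W *ᵥ ((Q : Matrix (Fin (n - 1)) (Fin (n - 1)) ℝ) *ᵥ (Wᵀ *ᵥ Y)))) g)
      * ((1 / (n : ℝ))
        * (Xᵀ *ᵥ (W *ᵥ ((Q : Matrix (Fin (n - 1)) (Fin (n - 1)) ℝ) *ᵥ (Wᵀ *ᵥ Y)))) h) ∂μ
      = (1 / (n : ℝ)) ^ 2 * ((Cᵀ * C) g h * ∑ i, Y i ^ 2) / ((n : ℝ) - 1) := by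
    intro g h
    simp_rw [hβ, mul_mul_mul_comm _ (Cᵀ g ⬝ᵥ _), integral_const_mul,
      orthogonalGroup.integral_dotProduct_mulVec_mul_dotProduct_mulVec,
      transpose_mulVec_dotProduct_self_of_sum_eq_zero hW hW1 hcard hY, hm, mul_apply', dotProduct,
      sq, mul_div_assoc]
    rfl
  refine ⟨fun g => ?_, fun g h => ?_, fun g h => ?_⟩
  · simp_rw [hβ, integral_const_mul, orthogonalGroup.integral_dotProduct_mulVec, mul_zero]
  · rw [hcov, div_mul_eq_div_div]
    ring
  · rw [hcov, transpose_mul_transpose_mul_of_sum_eq_zero hW hW1 hcard hX]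
    simp only [mul_apply, transpose_apply]
    ring

theorem stmt_17 (n p : ℕ) (hn : 2 ≤ n)
    (X : Matrix (Fin n) (Fin p) ℝ) (Y : Fin n → ℝ)
    (hX : ∀ g : Fin p, ∑ i, X i g = 0) (hY : ∑ i, Y i = 0)
    (W : Matrix (Fin n) (Fin (n - 1)) ℝ)
    (hW : Wᵀ * W = 1) (hW1 : Wᵀ *ᵥ (fun _ => 1) = 0)
    [MeasurableSpace (orthogonalGroup (Fin (n - 1)) ℝ)]
    [BorelSpace (orthogonalGroup (Fin (n - 1)) ℝ)]
    (μ : Measure (orthogonalGroup (Fin (n - 1)) ℝ))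
    [μ.IsHaarMeasure] [IsProbabilityMeasure μ] :
    (∀ g : Fin p,
        ∫ Q, (1 / (n : ℝ))
            * (Xᵀ *ᵥ (W *ᵥ ((Q : Matrix (Fin (n - 1)) (Fin (n - 1)) ℝ) *ᵥ (Wᵀ *ᵥ Y)))) g ∂μ
          = 0) ∧
    (∀ g h : Fin p,
        ∫ Q, ((1 / (n : ℝ))
              * (Xᵀ *ᵥ (W *ᵥ ((Q : Matrix (Fin (n - 1)) (Fin (n - 1)) ℝ) *ᵥ (Wᵀ *ᵥ Y)))) g)
            * ((1 / (n : ℝ))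
              * (Xᵀ *ᵥ (W *ᵥ ((Q : Matrix (Fin (n - 1)) (Fin (n - 1)) ℝ) *ᵥ (Wᵀ *ᵥ Y)))) h) ∂μ
          = ((1 / (n : ℝ)) * ∑ i, (Y i) ^ 2) / ((n : ℝ) * ((n : ℝ) - 1))
              * ((Wᵀ * X)ᵀ * (Wᵀ * X)) g h) ∧
    (∀ g h : Fin p,
        ∫ Q, ((1 / (n : ℝ))
              * (Xᵀ *ᵥ (W *ᵥ ((Q : Matrix (Fin (n - 1)) (Fin (n - 1)) ℝ) *ᵥ (Wᵀ *ᵥ Y)))) g)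
            * ((1 / (n : ℝ))
              * (Xᵀ *ᵥ (W *ᵥ ((Q : Matrix (Fin (n - 1)) (Fin (n - 1)) ℝ) *ᵥ (Wᵀ *ᵥ Y)))) h) ∂μ
          = ((1 / (n : ℝ)) * ∑ i, (Y i) ^ 2)
              * ((1 / (n : ℝ)) * ∑ i, X i g * X i h) / ((n : ℝ) - 1)) :=
  stmt_17_general n p X Y hX hY W hW hW1 μ
end
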